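/- arXiv:math/0608056 — 3 statements merged into one kernel-verified Lean document; each statement's English description precedes it below -/
import Mathlib

section
/- The function g(s) = √s · (1 − e^{−4√s}) on [0,∞) is a Bernstein function; moreover, for every 0 ≤ α ≤ 1, the function s ↦ s^{α/2}(1 − e^{−4 s^{α/2}}) = g(s^{α}) is again a Bernstein function. -/
open Finset

lemma binom_step (U V : ℕ → ℝ) (k : ℕ) :
    ∑ i ∈ range (k+2), ((k+1).choose i : ℝ) * (U i * V (k+1-i)) =
      ∑ i ∈ range (k+1), (k.choose i : ℝ) * (U (i+1) * V (k-i) + U i * V (k-i+1)) := by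
  have h1 : ∑ i ∈ range (k+2), ((k+1).choose i : ℝ) * (U i * V (k+1-i))
      = (∑ i ∈ range (k+1), ((k+1).choose (i+1) : ℝ) * (U (i+1) * V (k-i)))
        + (U 0 * V (k+1)) := by
    rw [Finset.sum_range_succ']
    simp [Nat.succ_sub_succ]
  have h2 : ∀ i ∈ range (k+1), ((k+1).choose (i+1) : ℝ) * (U (i+1) * V (k-i))
      = (k.choose i : ℝ) * (U (i+1) * V (k-i)) + (k.choose (i+1) : ℝ) * (U (i+1) * V (k-i)) := by
    intro i _
    rw [Nat.choose_succ_succ]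
    push_cast
    ring
  have h3 : ∑ i ∈ range (k+1), (k.choose i : ℝ) * (U i * V (k-i+1))
      = (∑ i ∈ range k, (k.choose (i+1) : ℝ) * (U (i+1) * V (k-(i+1)+1)))
        + (U 0 * V (k+1)) := by
    rw [Finset.sum_range_succ']
    simp
  have h5 : ∀ i ∈ range k, (k.choose (i+1) : ℝ) * (U (i+1) * V (k-(i+1)+1))
      = (k.choose (i+1) : ℝ) * (U (i+1) * V (k-i)) := by
    intro i hi
    have hik : i < k := Finset.mem_range.mp hi
    have : k - (i+1) + 1 = k - i := by omega
    rw [this]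
  have h4 : ∑ i ∈ range (k+1), (k.choose (i+1) : ℝ) * (U (i+1) * V (k-i))
      = ∑ i ∈ range k, (k.choose (i+1) : ℝ) * (U (i+1) * V (k-i)) := by
    rw [Finset.sum_range_succ, Nat.choose_succ_self]
    simp
  have hD : ∑ i ∈ range (k+1), (k.choose i : ℝ) * (U i * V (k-i+1))
      = (∑ i ∈ range (k+1), (k.choose (i+1) : ℝ) * (U (i+1) * V (k-i))) + (U 0 * V (k+1)) := by
    rw [h3, Finset.sum_congr rfl h5, h4]
  calc ∑ i ∈ range (k+2), ((k+1).choose i : ℝ) * (U i * V (k+1-i))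
      = (∑ i ∈ range (k+1), ((k.choose i : ℝ) * (U (i+1) * V (k-i))
          + (k.choose (i+1) : ℝ) * (U (i+1) * V (k-i)))) + (U 0 * V (k+1)) := by
        rw [h1, Finset.sum_congr rfl h2]
    _ = (∑ i ∈ range (k+1), (k.choose i : ℝ) * (U (i+1) * V (k-i)))
          + ((∑ i ∈ range (k+1), (k.choose (i+1) : ℝ) * (U (i+1) * V (k-i))) + (U 0 * V (k+1))) := by
        rw [Finset.sum_add_distrib]; ring
    _ = (∑ i ∈ range (k+1), (k.choose i : ℝ) * (U (i+1) * V (k-i)))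
          + ∑ i ∈ range (k+1), (k.choose i : ℝ) * (U i * V (k-i+1)) := by rw [hD]
    _ = ∑ i ∈ range (k+1), (k.choose i : ℝ) * (U (i+1) * V (k-i) + U i * V (k-i+1)) := by
        rw [← Finset.sum_add_distrib]
        exact Finset.sum_congr rfl fun i _ => by ring

/-- Completely monotone on `(0,∞)`, witnessed by an explicit chain of derivatives. -/
def IsCM (f : ℝ → ℝ) : Prop :=
  ∃ F : ℕ → ℝ → ℝ, F 0 = f ∧ (∀ k s, 0 < s → HasDerivAt (F k) (F (k+1) s) s) ∧
    (∀ k s, 0 < s → 0 ≤ (-1:ℝ)^k * F k s)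

lemma IsCM.add {f g : ℝ → ℝ} (hf : IsCM f) (hg : IsCM g) : IsCM (fun s => f s + g s) := by
  obtain ⟨F, hF0, hFd, hFs⟩ := hf
  obtain ⟨G, hG0, hGd, hGs⟩ := hg
  refine ⟨fun k s => F k s + G k s, by funext s; rw [← hF0, ← hG0], fun k s hs => (hFd k s hs).add (hGd k s hs), fun k s hs => ?_⟩
  have := add_nonneg (hFs k s hs) (hGs k s hs)
  simpa [mul_add] using this

lemma IsCM.const_mul {f : ℝ → ℝ} {c : ℝ} (hc : 0 ≤ c) (hf : IsCM f) :
    IsCM (fun s => c * f s) := by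
  obtain ⟨F, hF0, hFd, hFs⟩ := hf
  refine ⟨fun k s => c * F k s, by funext s; rw [← hF0], fun k s hs => (hFd k s hs).const_mul c,
    fun k s hs => ?_⟩
  have := mul_nonneg hc (hFs k s hs)
  ring_nf
  ring_nf at this
  linarith

lemma IsCM.mul {f g : ℝ → ℝ} (hf : IsCM f) (hg : IsCM g) : IsCM (fun s => f s * g s) := by
  obtain ⟨F, hF0, hFd, hFs⟩ := hf
  obtain ⟨G, hG0, hGd, hGs⟩ := hg
  refine ⟨fun k s => ∑ i ∈ range (k+1), (k.choose i : ℝ) * (F i s * G (k-i) s), ?_, ?_, ?_⟩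
  · funext s; simp [hF0, hG0]
  · intro k s hs
    have hterm : ∀ i ∈ range (k+1), HasDerivAt (fun s => (k.choose i : ℝ) * (F i s * G (k-i) s))
        ((k.choose i : ℝ) * (F (i+1) s * G (k-i) s + F i s * G (k-i+1) s)) s := by
      intro i _
      exact (((hFd i s hs).mul (hGd (k-i) s hs))).const_mul _
    have := HasDerivAt.fun_sum hterm
    refine this.congr_deriv (Eq.symm ?_)
    exact binom_step (fun i => F i s) (fun j => G j s) k
  · intro k s hs
    rw [Finset.mul_sum]
    apply Finset.sum_nonneg
    intro i hi
    have hik : i ≤ k := Nat.lt_succ_iff.mp (Finset.mem_range.mp hi)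
    have key : (-1:ℝ)^k * ((k.choose i : ℝ) * (F i s * G (k-i) s))
        = (k.choose i : ℝ) * (((-1:ℝ)^i * F i s) * ((-1:ℝ)^(k-i) * G (k-i) s)) := by
      rw [show (-1:ℝ)^k = (-1:ℝ)^i * (-1:ℝ)^(k-i) by rw [← pow_add, Nat.add_sub_cancel' hik]]
      ring
    rw [key]
    exact mul_nonneg (Nat.cast_nonneg _) (mul_nonneg (hFs i s hs) (hGs (k-i) s hs))

lemma isCM_rpow {w : ℝ} (hw : w ≤ 0) : IsCM (fun s : ℝ => s ^ w) := by
  refine ⟨fun k s => (∏ i ∈ range k, (w - i)) * s ^ (w - k), by funext s; simp, ?_, ?_⟩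
  · intro k s hs
    have h1 : HasDerivAt (fun s : ℝ => s ^ (w - k)) ((w - k) * s ^ (w - k - 1)) s :=
      Real.hasDerivAt_rpow_const (Or.inl (ne_of_gt hs))
    have h2 := h1.const_mul (∏ i ∈ range k, (w - i))
    refine h2.congr_deriv (Eq.symm ?_)
    show (∏ i ∈ range (k+1), (w - (i:ℝ))) * s ^ (w - ((k+1:ℕ):ℝ)) = _
    have he : w - ((k+1:ℕ):ℝ) = w - (k:ℝ) - 1 := by push_cast; ring
    rw [he, Finset.prod_range_succ]
    ring
  · intro k s hs
    have hprod : 0 ≤ (-1:ℝ)^k * ∏ i ∈ range k, (w - i) := by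
      induction k with
      | zero => simp
      | succ n ih =>
        rw [Finset.prod_range_succ, pow_succ]
        have h1 : 0 ≤ (n:ℝ) - w := by
          have : (0:ℝ) ≤ n := Nat.cast_nonneg n
          linarith
        calc (0:ℝ) ≤ ((-1:ℝ)^n * ∏ i ∈ range n, (w - i)) * ((n:ℝ) - w) := mul_nonneg ih h1
          _ = (-1:ℝ)^n * -1 * ((∏ i ∈ range n, (w - i)) * (w - n)) := by ring
    have hpow : (0:ℝ) ≤ s ^ (w - k) := Real.rpow_nonneg (le_of_lt hs) _
    calc (0:ℝ) ≤ ((-1:ℝ)^k * ∏ i ∈ range k, (w - i)) * s ^ (w - k) := mul_nonneg hprod hpow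
      _ = (-1:ℝ)^k * ((∏ i ∈ range k, (w - i)) * s ^ (w - k)) := by ring

/-- Derivative chain for a family `h n` satisfying `(h n)' = -u * h (n+1)`. -/
noncomputable def famChain (U : ℕ → ℝ → ℝ) (h : ℕ → ℝ → ℝ) : ℕ → ℕ → ℝ → ℝ
  | 0 => h
  | (k+1) => fun n s => -∑ i ∈ range (k+1), (k.choose i : ℝ) * (U i s * famChain U h (k-i) (n+1) s)
  decreasing_by exact Nat.lt_succ_of_le (Nat.sub_le k i)

lemma famChain_main (U : ℕ → ℝ → ℝ) (h : ℕ → ℝ → ℝ)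
    (hUd : ∀ k s, 0 < s → HasDerivAt (U k) (U (k+1) s) s)
    (hUs : ∀ k s, 0 < s → 0 ≤ (-1:ℝ)^k * U k s)
    (hpos : ∀ n s, 0 < s → 0 ≤ h n s)
    (hd : ∀ n s, 0 < s → HasDerivAt (h n) (-(U 0 s * h (n+1) s)) s) :
    ∀ k n, (∀ s, 0 < s → 0 ≤ (-1:ℝ)^k * famChain U h k n s) ∧
      (∀ s, 0 < s → HasDerivAt (famChain U h k n) (famChain U h (k+1) n s) s) := by
  intro k
  induction k using Nat.strong_induction_on with
  | _ k IH =>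
    intro n
    constructor
    · intro s hs
      match k with
      | 0 => simpa [famChain] using hpos n s hs
      | (m+1) =>
        rw [famChain]
        have key : (-1:ℝ)^(m+1) *
            -∑ i ∈ range (m+1), (m.choose i : ℝ) * (U i s * famChain U h (m-i) (n+1) s)
            = ∑ i ∈ range (m+1), (-1:ℝ)^m * ((m.choose i : ℝ) * (U i s * famChain U h (m-i) (n+1) s)) := by
          rw [← Finset.mul_sum]
          ring
        rw [key]
        apply Finset.sum_nonneg
        intro i hi
        have hik : i ≤ m := Nat.lt_succ_iff.mp (Finset.mem_range.mp hi)
        have hsgn : 0 ≤ (-1:ℝ)^(m-i) * famChain U h (m-i) (n+1) s :=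
          ((IH (m-i) (Nat.lt_succ_of_le (Nat.sub_le m i)) (n+1)).1 s hs)
        have key2 : (-1:ℝ)^m * ((m.choose i : ℝ) * (U i s * famChain U h (m-i) (n+1) s))
            = (m.choose i : ℝ) * (((-1:ℝ)^i * U i s) * ((-1:ℝ)^(m-i) * famChain U h (m-i) (n+1) s)) := by
          rw [show (-1:ℝ)^m = (-1:ℝ)^i * (-1:ℝ)^(m-i) by rw [← pow_add, Nat.add_sub_cancel' hik]]
          ring
        rw [key2]
        exact mul_nonneg (Nat.cast_nonneg _) (mul_nonneg (hUs i s hs) hsgn)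
    · intro s hs
      match k with
      | 0 =>
        have := hd n s hs
        have he : famChain U h 1 n s = -(U 0 s * h (n+1) s) := by
          rw [famChain]
          simp [famChain]
        rw [show famChain U h 0 n = h n by rw [famChain], he]
        exact this
      | (m+1) =>
        have hterm : ∀ i ∈ range (m+1),
            HasDerivAt (fun s => (m.choose i : ℝ) * (U i s * famChain U h (m-i) (n+1) s))
              ((m.choose i : ℝ) * (U (i+1) s * famChain U h (m-i) (n+1) s
                + U i s * famChain U h (m-i+1) (n+1) s)) s := by
          intro i hi
          have hder := (IH (m-i) (Nat.lt_succ_of_le (Nat.sub_le m i)) (n+1)).2 s hs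
          exact ((hUd i s hs).mul hder).const_mul _
        have hsum := (HasDerivAt.fun_sum hterm).neg
        have hfc : famChain U h (m+1) n = fun s =>
            -∑ i ∈ range (m+1), (m.choose i : ℝ) * (U i s * famChain U h (m-i) (n+1) s) := by
          rw [famChain]
        have hfc2 : famChain U h (m+2) n s
            = -∑ i ∈ range (m+2), ((m+1).choose i : ℝ) * (U i s * famChain U h (m+1-i) (n+1) s) := by
          rw [famChain]
        rw [hfc, hfc2]
        refine hsum.congr_deriv (Eq.symm ?_)
        rw [neg_inj]
        exact binom_step (fun i => U i s) (fun j => famChain U h j (n+1) s) m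

lemma isCM_family {u : ℝ → ℝ} (hu : IsCM u) (h : ℕ → ℝ → ℝ)
    (hpos : ∀ n s, 0 < s → 0 ≤ h n s)
    (hd : ∀ n s, 0 < s → HasDerivAt (h n) (-(u s * h (n+1) s)) s) (n : ℕ) : IsCM (h n) := by
  obtain ⟨U, hU0, hUd, hUs⟩ := hu
  have hd' : ∀ n s, 0 < s → HasDerivAt (h n) (-(U 0 s * h (n+1) s)) s := by
    rw [hU0]; exact hd
  obtain main := famChain_main U h hUd hUs hpos hd'
  exact ⟨fun k => famChain U h k n, by show famChain U h 0 n = h n; rw [famChain], fun k s hs => (main k n).2 s hs,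
    fun k s hs => (main k n).1 s hs⟩

/-- Closed form for `∫_0^4 a^n e^{-a u} da`. -/
noncomputable def Afun (n : ℕ) (u : ℝ) : ℝ :=
  (n.factorial : ℝ) * u ^ (-(n:ℤ)-1)
    - Real.exp (-(4*u)) * ∑ i ∈ range (n+1), ((n.factorial : ℝ)/(i.factorial : ℝ)) * 4^i * u ^ ((i:ℤ)-(n:ℤ)-1)

lemma Afun_nonneg (n : ℕ) {u : ℝ} (hu : 0 < u) : 0 ≤ Afun n u := by
  have hune : u ≠ 0 := ne_of_gt hu
  have hsum : ∑ i ∈ range (n+1), ((n.factorial : ℝ)/(i.factorial : ℝ)) * 4^i * u ^ ((i:ℤ)-(n:ℤ)-1)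
      = (∑ i ∈ range (n+1), ((n.factorial : ℝ)/(i.factorial : ℝ)) * (4*u)^i) * u ^ (-(n:ℤ)-1) := by
    rw [Finset.sum_mul]
    refine Finset.sum_congr rfl fun i _ => ?_
    rw [show (i:ℤ)-(n:ℤ)-1 = (i:ℤ) + (-(n:ℤ)-1) by ring, zpow_add₀ hune, zpow_natCast,
      mul_pow]
    ring
  have hbound : ∑ i ∈ range (n+1), ((n.factorial : ℝ)/(i.factorial : ℝ)) * (4*u)^i ≤ (n.factorial : ℝ) * Real.exp (4*u) := by
    have h1 : ∑ i ∈ range (n+1), ((n.factorial : ℝ)/(i.factorial : ℝ)) * (4*u)^i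
        = (n.factorial : ℝ) * ∑ i ∈ range (n+1), (4*u)^i / (i.factorial : ℝ) := by
      rw [Finset.mul_sum]; refine Finset.sum_congr rfl fun i _ => ?_; ring
    rw [h1]
    have h2 : ∑ i ∈ range (n+1), (4*u)^i / (i.factorial : ℝ) ≤ Real.exp (4*u) :=
      Real.sum_le_exp_of_nonneg (by positivity) (n+1)
    exact mul_le_mul_of_nonneg_left h2 (Nat.cast_nonneg _)
  have hzpos : (0:ℝ) < u ^ (-(n:ℤ)-1) := zpow_pos hu _
  have hexp : Real.exp (-(4*u)) * Real.exp (4*u) = 1 := by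
    rw [← Real.exp_add]; simp
  rw [Afun, hsum, sub_nonneg, ← mul_assoc]
  calc Real.exp (-(4*u)) * (∑ i ∈ range (n+1), ((n.factorial : ℝ)/(i.factorial : ℝ)) * (4*u)^i) * u ^ (-(n:ℤ)-1)
      ≤ Real.exp (-(4*u)) * ((n.factorial : ℝ) * Real.exp (4*u)) * u ^ (-(n:ℤ)-1) := by
        apply mul_le_mul_of_nonneg_right _ (le_of_lt hzpos)
        exact mul_le_mul_of_nonneg_left hbound (le_of_lt (Real.exp_pos _))
    _ = (n.factorial : ℝ) * u ^ (-(n:ℤ)-1) := by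
        rw [show Real.exp (-(4*u)) * ((n.factorial : ℝ) * Real.exp (4*u)) = (Real.exp (-(4*u)) * Real.exp (4*u)) * (n.factorial : ℝ) by ring, hexp, one_mul]

lemma Afun_sum_identity (n : ℕ) {u : ℝ} (hu : u ≠ 0) :
    ∑ i ∈ range (n+1), ((n.factorial : ℝ)/(i.factorial : ℝ)) * 4^i *
        (4 * u ^ ((i:ℤ)-(n:ℤ)-1) - (((i:ℤ)-(n:ℤ)-1 : ℤ) : ℝ) * u ^ ((i:ℤ)-(n:ℤ)-2))
      = ∑ i ∈ range (n+2), (((n+1).factorial : ℝ)/(i.factorial : ℝ)) * 4^i * u ^ ((i:ℤ)-(n:ℤ)-2) := by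
  have hfact : ∀ i : ℕ, ((i+1).factorial : ℝ) = (i+1) * (i.factorial : ℝ) := by
    intro i; exact_mod_cast Nat.factorial_succ i
  -- RHS: peel off the i = 0 term
  have hRHS : ∑ i ∈ range (n+2), (((n+1).factorial : ℝ)/(i.factorial : ℝ)) * 4^i * u ^ ((i:ℤ)-(n:ℤ)-2)
      = (∑ i ∈ range (n+1), (((n+1).factorial : ℝ)/((i+1).factorial : ℝ)) * 4^(i+1) * u ^ ((i:ℤ)-(n:ℤ)-1))
        + ((n+1).factorial : ℝ) * u ^ (-(n:ℤ)-2) := by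
    rw [Finset.sum_range_succ']
    congr 1
    · refine Finset.sum_congr rfl fun i _ => ?_
      have he : ((i+1:ℕ):ℤ) - (n:ℤ) - 2 = (i:ℤ)-(n:ℤ)-1 := by push_cast; ring
      rw [he]
    · simp
  -- LHS: split
  have hLHS : ∑ i ∈ range (n+1), ((n.factorial : ℝ)/(i.factorial : ℝ)) * 4^i *
        (4 * u ^ ((i:ℤ)-(n:ℤ)-1) - (((i:ℤ)-(n:ℤ)-1 : ℤ) : ℝ) * u ^ ((i:ℤ)-(n:ℤ)-2))
      = (∑ i ∈ range (n+1), ((n.factorial : ℝ)/(i.factorial : ℝ)) * 4^(i+1) * u ^ ((i:ℤ)-(n:ℤ)-1))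
        + ∑ i ∈ range (n+1), ((n.factorial : ℝ)/(i.factorial : ℝ)) * 4^i * (((n:ℝ)+1-(i:ℝ))) * u ^ ((i:ℤ)-(n:ℤ)-2) := by
    rw [← Finset.sum_add_distrib]
    refine Finset.sum_congr rfl fun i _ => ?_
    push_cast
    ring
  -- second LHS sum: peel off i = 0
  have hL2 : ∑ i ∈ range (n+1), ((n.factorial : ℝ)/(i.factorial : ℝ)) * 4^i * (((n:ℝ)+1-(i:ℝ))) * u ^ ((i:ℤ)-(n:ℤ)-2)
      = (∑ i ∈ range n, ((n.factorial : ℝ)/((i+1).factorial : ℝ)) * 4^(i+1) * ((n:ℝ)-(i:ℝ)) * u ^ ((i:ℤ)-(n:ℤ)-1))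
        + ((n+1).factorial : ℝ) * u ^ (-(n:ℤ)-2) := by
    rw [Finset.sum_range_succ']
    congr 1
    · refine Finset.sum_congr rfl fun i _ => ?_
      have he : ((i+1:ℕ):ℤ) - (n:ℤ) - 2 = (i:ℤ)-(n:ℤ)-1 := by push_cast; ring
      rw [he]
      push_cast
      ring
    · rw [hfact n]
      push_cast [Nat.factorial]
      ring
  -- extend range n to range (n+1) : the extra term is zero
  have hL2' : ∑ i ∈ range n, ((n.factorial : ℝ)/((i+1).factorial : ℝ)) * 4^(i+1) * ((n:ℝ)-(i:ℝ)) * u ^ ((i:ℤ)-(n:ℤ)-1)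
      = ∑ i ∈ range (n+1), ((n.factorial : ℝ)/((i+1).factorial : ℝ)) * 4^(i+1) * ((n:ℝ)-(i:ℝ)) * u ^ ((i:ℤ)-(n:ℤ)-1) := by
    rw [Finset.sum_range_succ]
    simp
  rw [hLHS, hL2, hL2', hRHS, ← add_assoc, ← Finset.sum_add_distrib]
  congr 1
  refine Finset.sum_congr rfl fun i hi => ?_
  have h1 : (i.factorial : ℝ) ≠ 0 := by positivity
  have h2 : ((i+1).factorial : ℝ) ≠ 0 := by positivity
  rw [hfact (n), hfact i]
  field_simp
  ring

lemma Afun_hasDeriv (n : ℕ) {u : ℝ} (hu : 0 < u) : HasDerivAt (Afun n) (-(Afun (n+1) u)) u := by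
  have hune : u ≠ 0 := ne_of_gt hu
  have hT1 : HasDerivAt (fun u : ℝ => (n.factorial : ℝ) * u ^ (-(n:ℤ)-1))
      ((n.factorial : ℝ) * (((-(n:ℤ)-1 : ℤ):ℝ) * u ^ (-(n:ℤ)-2))) u := by
    have h0 := (hasDerivAt_zpow (-(n:ℤ)-1) u (Or.inl hune)).const_mul (n.factorial : ℝ)
    have he : (-(n:ℤ)-1-1) = (-(n:ℤ)-2) := by ring
    rw [he] at h0
    exact h0
  have hexp : HasDerivAt (fun u : ℝ => Real.exp (-(4*u))) (Real.exp (-(4*u)) * (-4)) u := by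
    have h1 : HasDerivAt (fun u : ℝ => -(4*u)) (-4) u := by
      exact ((hasDerivAt_id u).const_mul (4:ℝ)).neg.congr_deriv (by ring)
    exact (Real.hasDerivAt_exp _).comp u h1
  have hS : HasDerivAt (fun u : ℝ => ∑ i ∈ range (n+1), ((n.factorial : ℝ)/(i.factorial : ℝ)) * 4^i * u ^ ((i:ℤ)-(n:ℤ)-1))
      (∑ i ∈ range (n+1), ((n.factorial : ℝ)/(i.factorial : ℝ)) * 4^i * ((((i:ℤ)-(n:ℤ)-1 : ℤ):ℝ) * u ^ ((i:ℤ)-(n:ℤ)-2))) u := by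
    apply HasDerivAt.fun_sum
    intro i _
    have h0 := (hasDerivAt_zpow ((i:ℤ)-(n:ℤ)-1) u (Or.inl hune)).const_mul (((n.factorial : ℝ)/(i.factorial : ℝ)) * 4^i)
    have he : ((i:ℤ)-(n:ℤ)-1-1) = ((i:ℤ)-(n:ℤ)-2) := by ring
    rw [he] at h0
    exact h0
  have htot := hT1.sub (hexp.mul hS)
  refine htot.congr_deriv (Eq.symm ?_)
  rw [Afun, neg_sub]
  have e1 : (-(((n+1):ℕ):ℤ)-1) = (-(n:ℤ)-2) := by push_cast; ring
  have e2 : ∑ i ∈ range (n+1+1), (((n+1).factorial : ℝ)/(i.factorial : ℝ)) * 4^i * u ^ ((i:ℤ)-(((n+1):ℕ):ℤ)-1)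
      = ∑ i ∈ range (n+2), (((n+1).factorial : ℝ)/(i.factorial : ℝ)) * 4^i * u ^ ((i:ℤ)-(n:ℤ)-2) := by
    refine Finset.sum_congr rfl fun i _ => ?_
    have he : ((i:ℤ)-(((n+1):ℕ):ℤ)-1) = ((i:ℤ)-(n:ℤ)-2) := by push_cast; ring
    rw [he]
  rw [e1, e2]
  have hkey := Afun_sum_identity n hune
  have hexpand : ∑ i ∈ range (n+1), ((n.factorial : ℝ)/(i.factorial : ℝ)) * 4^i *
        (4 * u ^ ((i:ℤ)-(n:ℤ)-1) - (((i:ℤ)-(n:ℤ)-1 : ℤ) : ℝ) * u ^ ((i:ℤ)-(n:ℤ)-2))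
      = 4 * (∑ i ∈ range (n+1), ((n.factorial : ℝ)/(i.factorial : ℝ)) * 4^i * u ^ ((i:ℤ)-(n:ℤ)-1))
        - ∑ i ∈ range (n+1), ((n.factorial : ℝ)/(i.factorial : ℝ)) * 4^i * ((((i:ℤ)-(n:ℤ)-1 : ℤ):ℝ) * u ^ ((i:ℤ)-(n:ℤ)-2)) := by
    rw [Finset.mul_sum, ← Finset.sum_sub_distrib]
    refine Finset.sum_congr rfl fun i _ => ?_
    ring
  have hTS : ∑ i ∈ range (n+2), (((n+1).factorial : ℝ)/(i.factorial : ℝ)) * 4^i * u ^ ((i:ℤ)-(n:ℤ)-2)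
      = 4 * (∑ i ∈ range (n+1), ((n.factorial : ℝ)/(i.factorial : ℝ)) * 4^i * u ^ ((i:ℤ)-(n:ℤ)-1))
        - ∑ i ∈ range (n+1), ((n.factorial : ℝ)/(i.factorial : ℝ)) * 4^i * ((((i:ℤ)-(n:ℤ)-1 : ℤ):ℝ) * u ^ ((i:ℤ)-(n:ℤ)-2)) := by
    rw [← hkey]; exact hexpand
  rw [hTS]
  have hfac : ((n+1).factorial : ℝ) = ((n:ℝ)+1) * (n.factorial : ℝ) := by
    exact_mod_cast Nat.factorial_succ n
  have hcast : (((-(n:ℤ)-1):ℤ):ℝ) = -((n:ℝ)+1) := by push_cast; ring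
  rw [hfac, hcast]
  ring

lemma IsCM.congr {f g : ℝ → ℝ} (hf : IsCM f) (h : f = g) : IsCM g := h ▸ hf


/-- A Bernstein function: nonnegative on `[0,∞)`, continuous there, smooth on `(0,∞)`,
with derivatives alternating in sign starting with `f' ≥ 0`. -/
def IsBernstein (f : ℝ → ℝ) : Prop :=
  (∀ s : ℝ, 0 ≤ s → 0 ≤ f s) ∧ ContinuousOn f (Set.Ici 0) ∧
    ContDiffOn ℝ (⊤ : ℕ∞) f (Set.Ioi 0) ∧
    ∀ k : ℕ, 1 ≤ k → ∀ s : ℝ, 0 < s →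
      0 ≤ (-1 : ℝ) ^ (k - 1) * iteratedDerivWithin k f (Set.Ioi 0) s

lemma key_bernstein {β : ℝ} (hβ0 : 0 ≤ β) (hβ : β ≤ 1/2) :
    IsBernstein (fun s : ℝ => s ^ β * (1 - Real.exp (-(4 * s ^ β)))) := by
  have hrpowD : ∀ s : ℝ, 0 < s → HasDerivAt (fun s : ℝ => s ^ β) (β * s ^ (β-1)) s := by
    intro s hs
    exact Real.hasDerivAt_rpow_const (p := β) (Or.inl (ne_of_gt hs))
  have hu : IsCM (fun s : ℝ => β * s ^ (β - 1)) :=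
    (isCM_rpow (by linarith)).const_mul hβ0
  have hAd : ∀ (n : ℕ) (s:ℝ), 0 < s → HasDerivAt (fun s : ℝ => Afun n (s ^ β))
      (-((β * s ^ (β-1)) * Afun (n+1) (s ^ β))) s := by
    intro n s hs
    have h1 := (Afun_hasDeriv n (Real.rpow_pos_of_pos hs β)).comp s (hrpowD s hs)
    refine h1.congr_deriv ?_
    ring
  have hACM : IsCM (fun s : ℝ => Afun 0 (s ^ β)) :=
    isCM_family hu (fun n s => Afun n (s ^ β))
      (fun n s hs => Afun_nonneg n (Real.rpow_pos_of_pos hs β)) hAd 0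
  have hEpos : ∀ (n : ℕ) (s:ℝ), 0 < s → 0 ≤ (4:ℝ)^n * Real.exp (-(4 * s ^ β)) := by
    intro n s hs; positivity
  have hEd : ∀ (n : ℕ) (s:ℝ), 0 < s → HasDerivAt (fun s : ℝ => (4:ℝ)^n * Real.exp (-(4 * s ^ β)))
      (-((β * s ^ (β-1)) * ((4:ℝ)^(n+1) * Real.exp (-(4 * s ^ β))))) s := by
    intro n s hs
    have hinner : HasDerivAt (fun s : ℝ => -(4 * s ^ β)) (-(4 * (β * s ^ (β-1)))) s :=
      ((hrpowD s hs).const_mul 4).neg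
    have h2 := ((Real.hasDerivAt_exp _).comp s hinner).const_mul ((4:ℝ)^n)
    refine h2.congr_deriv ?_
    ring
  have hECM : IsCM (fun s : ℝ => (4:ℝ)^1 * Real.exp (-(4 * s ^ β))) :=
    isCM_family hu _ hEpos hEd 1
  have hr : IsCM (fun s : ℝ => s ^ (2*β-1)) := isCM_rpow (by linarith)
  have hGdCM : IsCM (fun s : ℝ => β * (s ^ (2*β-1) * Afun 0 (s ^ β))
      + β * (s ^ (2*β-1) * ((4:ℝ)^1 * Real.exp (-(4 * s ^ β))))) :=
    ((hr.mul hACM).const_mul hβ0).add ((hr.mul hECM).const_mul hβ0)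
  have hGderiv : ∀ s : ℝ, 0 < s → HasDerivAt (fun s : ℝ => s ^ β * (1 - Real.exp (-(4 * s ^ β))))
      (β * (s ^ (2*β-1) * Afun 0 (s ^ β))
        + β * (s ^ (2*β-1) * ((4:ℝ)^1 * Real.exp (-(4 * s ^ β))))) s := by
    intro s hs
    have hv : (0:ℝ) < s ^ β := Real.rpow_pos_of_pos hs β
    have hexp : HasDerivAt (fun s : ℝ => Real.exp (-(4 * s ^ β)))
        (Real.exp (-(4 * s ^ β)) * (-(4 * (β * s ^ (β-1))))) s :=
      (Real.hasDerivAt_exp _).comp s (((hrpowD s hs).const_mul 4).neg)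
    have hmain := (hrpowD s hs).mul ((hasDerivAt_const s (1:ℝ)).fun_sub hexp)
    refine hmain.congr_deriv (Eq.symm ?_)
    have hA0 : Afun 0 (s ^ β) = (s ^ β)⁻¹ - Real.exp (-(4 * s ^ β)) * (s ^ β)⁻¹ := by
      simp [Afun, Nat.factorial]
    have hvinv : (s ^ β)⁻¹ = s ^ (-β) := (Real.rpow_neg (le_of_lt hs) β).symm
    have h1 : s ^ (2*β-1) * s ^ (-β) = s ^ (β-1) := by
      rw [← Real.rpow_add hs]; congr 1; ring
    have h2 : s ^ β * s ^ (β-1) = s ^ (2*β-1) := by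
      rw [← Real.rpow_add hs]; congr 1; ring
    rw [hA0, hvinv]
    linear_combination (β*(1 - Real.exp (-(4 * s ^ β))))*h1
      - (4*β*Real.exp (-(4 * s ^ β)))*h2
  obtain ⟨F, hF0, hFd, hFs⟩ := hGdCM
  have hiter : ∀ k, ∀ s ∈ Set.Ioi (0:ℝ),
      iteratedDerivWithin k (fun s : ℝ => s ^ β * (1 - Real.exp (-(4 * s ^ β)))) (Set.Ioi 0) s
        = Nat.casesOn k (fun s : ℝ => s ^ β * (1 - Real.exp (-(4 * s ^ β)))) F s := by
    intro k
    induction k with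
    | zero => intro s _; simp
    | succ k ih =>
      intro s hs
      have hs' : (0:ℝ) < s := hs
      rw [iteratedDerivWithin_succ]
      rw [derivWithin_congr ih (ih s hs)]
      rw [derivWithin_of_isOpen isOpen_Ioi hs]
      cases k with
      | zero =>
        show deriv (fun s : ℝ => s ^ β * (1 - Real.exp (-(4 * s ^ β)))) s = F 0 s
        rw [hF0]
        exact (hGderiv s hs').deriv
      | succ j =>
        show deriv (F j) s = F (j+1) s
        exact (hFd j s hs').deriv
  refine ⟨?_, ?_, ?_, ?_⟩
  · intro s hs0
    apply mul_nonneg (Real.rpow_nonneg hs0 β)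
    have harg : -(4 * s ^ β) ≤ 0 := by
      have := Real.rpow_nonneg hs0 β
      nlinarith
    have := Real.exp_le_one_iff.mpr harg
    linarith
  · have hc : ContinuousOn (fun s:ℝ => s ^ β) (Set.Ici 0) := fun s _ =>
      (Real.continuousAt_rpow_const s β (Or.inr hβ0)).continuousWithinAt
    exact hc.mul (continuousOn_const.sub
      (Real.continuous_exp.comp_continuousOn ((continuousOn_const.mul hc).neg)))
  · intro s hs
    have hs' : (0:ℝ) < s := hs
    have h1 : ContDiffAt ℝ ((⊤ : ℕ∞) : WithTop ℕ∞) (fun x : ℝ => x ^ β) s :=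
      Real.contDiffAt_rpow_const_of_ne (ne_of_gt hs')
    exact (h1.mul (contDiffAt_const.sub
      (Real.contDiff_exp.contDiffAt.comp s ((contDiffAt_const.mul h1).neg)))).contDiffWithinAt
  · intro k hk s hs
    match k, hk with
    | (m+1), _ =>
      rw [hiter (m+1) s hs]
      simpa using hFs m s hs


/-- `g(s) = √s (1 - e^{-4√s})` is a Bernstein function, and for `0 ≤ α ≤ 1` so is
`s ↦ s^{α/2}(1 - e^{-4 s^{α/2}})`. -/
theorem sqrt_one_sub_exp_bernstein :
    IsBernstein (fun s : ℝ => Real.sqrt s * (1 - Real.exp (-(4 * Real.sqrt s)))) ∧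
    ∀ α : ℝ, 0 ≤ α → α ≤ 1 →
      IsBernstein (fun s : ℝ => s ^ (α / 2) * (1 - Real.exp (-(4 * s ^ (α / 2))))) := by
  constructor
  · have h := key_bernstein (β := 1/2) (by norm_num) (by norm_num)
    have heq : (fun s : ℝ => Real.sqrt s * (1 - Real.exp (-(4 * Real.sqrt s))))
        = fun s : ℝ => s ^ (1/2 : ℝ) * (1 - Real.exp (-(4 * s ^ (1/2 : ℝ)))) := by
      funext s
      rw [Real.sqrt_eq_rpow]
    rw [heq]
    exact h
  · intro α hα0 hα1
    exact key_bernstein (by linarith) (by linarith)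
end

section
/- Let q : ℝ^n × ℝ^n → ℝ be smooth with q(x,ξ) ≥ δ_0(1+ψ(ξ)) for some δ_0 > 0, and suppose |∂_ξ^α ∂_x^β q(x,ξ)| ≤ c_{α,β}(1+ψ(ξ))^{(2−ρ(|α|))/2} for all α, β. Then for every nonzero multi-index pair (α,β) there is a constant c such that |∂_ξ^α ∂_x^β log(1+q(x,ξ))| ≤ c (1+ψ(ξ))^{−ρ(|α|)/2} for all x, ξ. -/
/-- `v` is a family of coordinate directions in `ℝⁿ × ℝⁿ`. -/
def IsCoordDirs {n k : ℕ} (v : Fin k → ((Fin n → ℝ) × (Fin n → ℝ))) : Prop :=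
  ∀ i, ∃ j : Fin n, v i = (Pi.single j 1, 0) ∨ v i = (0, Pi.single j 1)

/-- The number of `ξ`-directions among the family `v`, i.e. `|α|`. -/
noncomputable def xiCount {n k : ℕ} (v : Fin k → ((Fin n → ℝ) × (Fin n → ℝ))) : ℕ :=
  (Finset.univ.filter fun i => (v i).1 = 0).card

/-- The iterated derivatives of `t ↦ log (1 + t)` on `(0, ∞)`. -/
lemma logDeriv_aux (m : ℕ) : ∀ y : ℝ, 0 < y →
    iteratedDeriv (m + 1) (fun t => Real.log (1 + t)) y
      = (-1) ^ m * m.factorial * ((1 + y) ^ (m + 1))⁻¹ := by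
  induction m with
  | zero =>
    intro y hy
    have h0 : (1 : ℝ) + y ≠ 0 := by linarith
    have h1 : HasDerivAt (fun t : ℝ => Real.log (1 + t)) (1 / (1 + y)) y := by
      have h : HasDerivAt (fun t : ℝ => 1 + t) 1 y := (hasDerivAt_id y).const_add 1
      simpa using h.log h0
    simp [iteratedDeriv_one, h1.deriv, one_div]
  | succ m ih =>
    intro y hy
    have h0 : (1 : ℝ) + y ≠ 0 := by linarith
    rw [iteratedDeriv_succ]
    have hev : iteratedDeriv (m + 1) (fun t => Real.log (1 + t)) =ᶠ[nhds y]
        fun z => (-1) ^ m * m.factorial * ((1 + z) ^ (m + 1))⁻¹ := by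
      filter_upwards [isOpen_Ioi.mem_nhds hy] with t ht using ih t ht
    rw [hev.deriv_eq]
    have hpow : HasDerivAt (fun z : ℝ => (1 + z) ^ (m + 1))
        ((m + 1 : ℕ) * (1 + y) ^ m * 1) y := by
      have h : HasDerivAt (fun t : ℝ => 1 + t) 1 y := (hasDerivAt_id y).const_add 1
      simpa using h.fun_pow (m + 1)
    have hne : (1 + y) ^ (m + 1) ≠ 0 := pow_ne_zero _ h0
    have hinv : HasDerivAt (fun z : ℝ => ((1 + z) ^ (m + 1))⁻¹)
        (-((m + 1 : ℕ) * (1 + y) ^ m * 1) / ((1 + y) ^ (m + 1)) ^ 2) y := hpow.inv hne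
    have hfull := hinv.const_mul ((-1 : ℝ) ^ m * m.factorial)
    rw [hfull.deriv]
    rw [Nat.factorial_succ]
    push_cast
    field_simp
    ring

/-- Subadditivity of `k ↦ min k 2` over finite sums. -/
lemma min_sum_le_sum_min {ι : Type*} (s : Finset ι) (f : ι → ℕ) :
    min (∑ i ∈ s, f i) 2 ≤ ∑ i ∈ s, min (f i) 2 := by
  classical
  induction s using Finset.cons_induction with
  | empty => simp
  | cons a s ha ih =>
    rw [Finset.sum_cons, Finset.sum_cons]
    omega

lemma rpow_finset_sum {ι : Type*} (s : Finset ι) (f : ι → ℝ) {t : ℝ} (ht : 0 < t) :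
    t ^ (∑ i ∈ s, f i) = ∏ i ∈ s, t ^ f i := by
  classical
  induction s using Finset.cons_induction with
  | empty => simp
  | cons a s ha ih => rw [Finset.sum_cons, Finset.prod_cons, Real.rpow_add ht, ih]

/-- For an elliptic symbol `q ∈ S^{2,ψ}_ρ`, the nonzero derivatives of
`log(1+q)` gain the decay `(1+ψ)^{-ρ(|α|)/2}`. -/
theorem log_symbol_estimate {n : ℕ}
    (ψ : (Fin n → ℝ) → ℝ) (hψ : ∀ ξ, 0 ≤ ψ ξ)
    (q : ((Fin n → ℝ) × (Fin n → ℝ)) → ℝ) (hq : ContDiff ℝ (⊤ : ℕ∞) q)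
    (δ₀ : ℝ) (hδ₀ : 0 < δ₀)
    (hell : ∀ x ξ : Fin n → ℝ, δ₀ * (1 + ψ ξ) ≤ q (x, ξ))
    (hbound : ∀ k : ℕ, ∃ c : ℝ, 0 ≤ c ∧
      ∀ v : Fin k → ((Fin n → ℝ) × (Fin n → ℝ)), IsCoordDirs v →
        ∀ x ξ : Fin n → ℝ, |iteratedFDeriv ℝ k q (x, ξ) v| ≤
          c * (1 + ψ ξ) ^ ((2 - min (xiCount v : ℝ) 2) / 2)) :
    ∀ k : ℕ, 1 ≤ k → ∃ c : ℝ, 0 ≤ c ∧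
      ∀ v : Fin k → ((Fin n → ℝ) × (Fin n → ℝ)), IsCoordDirs v →
        ∀ x ξ : Fin n → ℝ,
          |iteratedFDeriv ℝ k (fun z => Real.log (1 + q z)) (x, ξ) v| ≤
            c * (1 + ψ ξ) ^ (-(min (xiCount v : ℝ) 2) / 2) := by
  classical
  intro k hk
  choose C hC0 hC using hbound
  set glog : ℝ → ℝ := fun t => Real.log (1 + t) with hglog
  have hqpos : ∀ z : ((Fin n → ℝ) × (Fin n → ℝ)), 0 < q z := by
    intro z
    have h1 : (0:ℝ) < δ₀ * (1 + ψ z.2) := by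
      have := hψ z.2; positivity
    have h2 := hell z.1 z.2
    rw [Prod.mk.eta] at h2
    linarith
  -- Taylor series of glog on (0,∞)
  have hgc : ContDiffOn ℝ ((⊤ : ℕ∞) : WithTop ℕ∞) glog (Set.Ioi 0) := by
    intro y hy
    have h0 : (1:ℝ) + y ≠ 0 := by have : (0:ℝ) < y := hy; linarith
    have h1 : ContDiffAt ℝ ((⊤ : ℕ∞) : WithTop ℕ∞) Real.log (1 + y) :=
      Real.contDiffAt_log.2 h0
    have h2 : ContDiffAt ℝ ((⊤ : ℕ∞) : WithTop ℕ∞) (fun t : ℝ => 1 + t) y :=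
      contDiffAt_const.add contDiffAt_id
    exact (h1.comp y h2).contDiffWithinAt
  have hg := hgc.ftaylorSeriesWithin (uniqueDiffOn_Ioi 0)
  have hq' : ContDiffOn ℝ ((⊤ : ℕ∞) : WithTop ℕ∞) q Set.univ :=
    (hq.of_le (by simp)).contDiffOn
  have hf := hq'.ftaylorSeriesWithin uniqueDiffOn_univ
  have hmaps : Set.MapsTo q Set.univ (Set.Ioi (0:ℝ)) := fun z _ => hqpos z
  have hcomp := hg.comp hf hmaps
  have key : ∀ z : ((Fin n → ℝ) × (Fin n → ℝ)),
      iteratedFDeriv ℝ k (fun z => Real.log (1 + q z)) z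
        = (ftaylorSeriesWithin ℝ glog (Set.Ioi 0) (q z)).taylorComp
            (ftaylorSeriesWithin ℝ q Set.univ z) k := by
    intro z
    have h := hcomp.eq_iteratedFDerivWithin_of_uniqueDiffOn (m := k)
      (by exact_mod_cast le_top) uniqueDiffOn_univ (Set.mem_univ z)
    rw [iteratedFDerivWithin_univ] at h
    exact h.symm
  -- evaluation of the series of glog
  have hQ : ∀ (L : ℕ) (z : ((Fin n → ℝ) × (Fin n → ℝ))) (w : Fin L → ℝ),
      ftaylorSeriesWithin ℝ glog (Set.Ioi 0) (q z) L w
        = (∏ i, w i) * iteratedDeriv L glog (q z) := by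
    intro L z w
    have h1 : ftaylorSeriesWithin ℝ glog (Set.Ioi 0) (q z) L
        = iteratedFDeriv ℝ L glog (q z) :=
      iteratedFDerivWithin_of_isOpen L isOpen_Ioi (hqpos z)
    rw [h1, iteratedDeriv_eq_iteratedFDeriv]
    calc (iteratedFDeriv ℝ L glog (q z)) w
        = (iteratedFDeriv ℝ L glog (q z)) (fun i => w i • (fun _ : Fin L => (1:ℝ)) i) := by
          congr 1; funext i; simp
      _ = (∏ i, w i) • (iteratedFDeriv ℝ L glog (q z)) (fun _ => (1:ℝ)) :=
          (iteratedFDeriv ℝ L glog (q z)).map_smul_univ w (fun _ => (1:ℝ))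
      _ = (∏ i, w i) * (iteratedFDeriv ℝ L glog (q z)) (fun _ => (1:ℝ)) := by
          rw [smul_eq_mul]
  have hP : ∀ (m : ℕ) (z : ((Fin n → ℝ) × (Fin n → ℝ))),
      ftaylorSeriesWithin ℝ q Set.univ z m = iteratedFDeriv ℝ m q z := by
    intro m z
    show iteratedFDerivWithin ℝ m q Set.univ z = iteratedFDeriv ℝ m q z
    rw [iteratedFDerivWithin_univ]
  -- the constant
  refine ⟨∑ c : OrderedFinpartition k,
      ((c.length - 1).factorial : ℝ) * δ₀⁻¹ ^ c.length * ∏ i, C (c.partSize i),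
    ?_, ?_⟩
  · refine Finset.sum_nonneg fun c _ => ?_
    have h1 : (0:ℝ) ≤ ∏ i, C (c.partSize i) :=
      Finset.prod_nonneg fun i _ => hC0 _
    positivity
  intro v hv x ξ
  set t : ℝ := 1 + ψ ξ with htdef
  have ht1 : (1:ℝ) ≤ t := by have := hψ ξ; simp [htdef]; linarith
  have ht0 : (0:ℝ) < t := lt_of_lt_of_le one_pos ht1
  rw [key (x, ξ)]
  have expand : (ftaylorSeriesWithin ℝ glog (Set.Ioi 0) (q (x, ξ))).taylorComp
      (ftaylorSeriesWithin ℝ q Set.univ (x, ξ)) k v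
      = ∑ c : OrderedFinpartition k,
          ftaylorSeriesWithin ℝ glog (Set.Ioi 0) (q (x, ξ)) c.length
            (c.applyOrderedFinpartition
              (fun m => ftaylorSeriesWithin ℝ q Set.univ (x, ξ) (c.partSize m)) v) := by
    rw [FormalMultilinearSeries.taylorComp, ContinuousMultilinearMap.sum_apply]
    rfl
  rw [expand]
  refine le_trans (Finset.abs_sum_le_sum_abs _ _) ?_
  rw [Finset.sum_mul]
  refine Finset.sum_le_sum fun c _ => ?_
  -- notation for this partition
  set L := c.length with hLdef
  have hL1 : 1 ≤ L := c.length_pos hk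
  have hLs : L = (L - 1) + 1 := (Nat.succ_pred_eq_of_pos hL1).symm
  set z := ((x, ξ) : (Fin n → ℝ) × (Fin n → ℝ)) with hzdef
  have hld : iteratedDeriv L glog (q z)
      = (-1) ^ (L - 1) * ((L - 1).factorial : ℝ) * ((1 + q z) ^ L)⁻¹ := by
    rw [hLs]
    exact logDeriv_aux (L - 1) (q z) (hqpos z)
  have hq0 : (0:ℝ) < 1 + q z := by have := hqpos z; linarith
  -- the values in the blocks
  set w : Fin L → ℝ := fun i =>
    iteratedFDeriv ℝ (c.partSize i) q z ((v ∘ c.emb i)) with hwdef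
  have happ : c.applyOrderedFinpartition
      (fun m => ftaylorSeriesWithin ℝ q Set.univ (x, ξ) (c.partSize m)) v = w := by
    funext i
    show ftaylorSeriesWithin ℝ q Set.univ (x, ξ) (c.partSize i) (v ∘ c.emb i) = w i
    rw [hP]
  rw [hQ, happ, hld]
  -- absolute value computation
  have habs : |(∏ i, w i) * ((-1) ^ (L - 1) * ((L - 1).factorial : ℝ) * ((1 + q z) ^ L)⁻¹)|
      = (∏ i, |w i|) * (((L - 1).factorial : ℝ) * ((1 + q z) ^ L)⁻¹) := by
    rw [abs_mul, Finset.abs_prod, abs_mul, abs_mul, abs_pow, abs_neg, abs_one, one_pow,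
      one_mul, Nat.abs_cast, abs_of_pos (by positivity)]
  rw [habs]
  -- bounds on each factor
  set e : Fin L → ℝ := fun i => (2 - min (xiCount (v ∘ c.emb i) : ℝ) 2) / 2 with hedef
  have hw : ∀ i, |w i| ≤ C (c.partSize i) * t ^ e i := by
    intro i
    exact hC (c.partSize i) (v ∘ c.emb i) (fun j => hv (c.emb i j)) x ξ
  have hinvb : ((1 + q z) ^ L)⁻¹ ≤ δ₀⁻¹ ^ L * t ^ (-(L:ℝ)) := by
    have h1 : δ₀ * t ≤ 1 + q z := by
      have := hell x ξ
      simp only [hzdef, htdef] at *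
      linarith
    have h2 : (δ₀ * t) ^ L ≤ (1 + q z) ^ L :=
      pow_le_pow_left₀ (by positivity) h1 L
    have h3 : ((1 + q z) ^ L)⁻¹ ≤ ((δ₀ * t) ^ L)⁻¹ :=
      inv_anti₀ (by positivity) h2
    calc ((1 + q z) ^ L)⁻¹ ≤ ((δ₀ * t) ^ L)⁻¹ := h3
      _ = δ₀⁻¹ ^ L * t ^ (-(L:ℝ)) := by
          rw [mul_pow, mul_inv, ← inv_pow, ← inv_pow, inv_pow t L,
            ← Real.rpow_natCast t L, ← Real.rpow_neg ht0.le]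
  -- combine
  have step1 : (∏ i, |w i|) * (((L - 1).factorial : ℝ) * ((1 + q z) ^ L)⁻¹)
      ≤ (∏ i, (C (c.partSize i) * t ^ e i)) *
          (((L - 1).factorial : ℝ) * (δ₀⁻¹ ^ L * t ^ (-(L:ℝ)))) := by
    have hp1 : (∏ i, |w i|) ≤ ∏ i, (C (c.partSize i) * t ^ e i) :=
      Finset.prod_le_prod (fun i _ => abs_nonneg _) (fun i _ => hw i)
    have hp2 : ((L - 1).factorial : ℝ) * ((1 + q z) ^ L)⁻¹
        ≤ ((L - 1).factorial : ℝ) * (δ₀⁻¹ ^ L * t ^ (-(L:ℝ))) := by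
      have := hinvb
      have hf0 : (0:ℝ) ≤ ((L - 1).factorial : ℝ) := by positivity
      exact mul_le_mul_of_nonneg_left hinvb hf0
    exact mul_le_mul hp1 hp2 (by positivity) (Finset.prod_nonneg fun i _ => by
      have := hC0 (c.partSize i); positivity)
  refine le_trans step1 ?_
  have key2 : (∏ i, (C (c.partSize i) * t ^ e i)) *
      (((L - 1).factorial : ℝ) * (δ₀⁻¹ ^ L * t ^ (-(L:ℝ))))
      = (((L - 1).factorial : ℝ) * δ₀⁻¹ ^ L * ∏ i, C (c.partSize i)) *
          t ^ ((∑ i, e i) - (L:ℝ)) := by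
    rw [Finset.prod_mul_distrib, ← rpow_finset_sum _ _ ht0, Real.rpow_sub ht0,
      Real.rpow_neg ht0.le, Real.rpow_natCast]
    ring
  rw [key2]
  -- exponent comparison
  have hsum : ∑ i, xiCount (v ∘ c.emb i) = xiCount v := by
    have h := c.sum_sigma_eq_sum (fun i => if (v i).1 = 0 then 1 else 0)
    calc ∑ i, xiCount (v ∘ c.emb i)
        = ∑ i : Fin L, ∑ j : Fin (c.partSize i),
            (if (v (c.emb i j)).1 = 0 then 1 else 0) := by
          refine Finset.sum_congr rfl fun i _ => ?_
          rw [xiCount, Finset.card_filter]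
          rfl
      _ = ∑ i : Fin k, (if (v i).1 = 0 then 1 else 0) := h
      _ = xiCount v := by rw [xiCount, Finset.card_filter]
  have hexp : (∑ i, e i) - (L:ℝ) ≤ -(min (xiCount v : ℝ) 2) / 2 := by
    have hmin : ∀ i : Fin L, min ((xiCount (v ∘ c.emb i)) : ℝ) 2
        = ((min (xiCount (v ∘ c.emb i)) 2 : ℕ) : ℝ) := by
      intro i; push_cast; ring_nf
    have hminv : min ((xiCount v : ℝ)) 2 = ((min (xiCount v) 2 : ℕ) : ℝ) := by
      push_cast; ring_nf
    have hkey : ((min (xiCount v) 2 : ℕ) : ℝ)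
        ≤ ∑ i : Fin L, ((min (xiCount (v ∘ c.emb i)) 2 : ℕ) : ℝ) := by
      rw [← Nat.cast_sum]
      exact_mod_cast (hsum ▸ min_sum_le_sum_min Finset.univ fun i => xiCount (v ∘ c.emb i))
    have hsume : ∑ i, e i = (L:ℝ) - (∑ i : Fin L,
        ((min (xiCount (v ∘ c.emb i)) 2 : ℕ) : ℝ)) / 2 := by
      have h1 : ∀ i : Fin L, e i = 1 - ((min (xiCount (v ∘ c.emb i)) 2 : ℕ) : ℝ) / 2 := by
        intro i
        rw [hedef]
        dsimp only
        rw [hmin i]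
        ring
      rw [Finset.sum_congr rfl fun i _ => h1 i, Finset.sum_sub_distrib,
        Finset.sum_const, Finset.card_univ, Fintype.card_fin, ← Finset.sum_div]
      simp
    rw [hsume, hminv]
    linarith
  have hcoef : (0:ℝ) ≤ ((L - 1).factorial : ℝ) * δ₀⁻¹ ^ L * ∏ i, C (c.partSize i) := by
    have h1 : (0:ℝ) ≤ ∏ i, C (c.partSize i) := Finset.prod_nonneg fun i _ => hC0 _
    positivity
  exact mul_le_mul_of_nonneg_left (Real.rpow_le_rpow_of_exponent_le ht1 hexp) hcoef
end

section
/- Let p : ℝ^n × ℝ^n → (0,∞) be smooth with p(x,ξ) ≥ δ(1+ψ(ξ))^{μ} for some δ, μ > 0, and suppose that for every ε > 0 and all multi-indices α, β, |∂_ξ^α ∂_x^β p(x,ξ)| ≤ c_{α,β,ε} p(x,ξ)(1+ψ(ξ))^{(−ρ(|α|)+ε)/2}. Then for every λ ≥ 0 and every ε > 0, the function p_λ^{−1}(x,ξ) := 1/(p(x,ξ)+λ) satisfies |∂_ξ^α ∂_x^β p_λ^{−1}(x,ξ)| ≤ c̃_{α,β,ε}(1+ψ(ξ))^{(−2μ+ε−ρ(|α|))/2},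 i.e. p_λ^{−1} ∈ S^{−2μ+ε,ψ}_ρ(ℝ^n). -/
namespace ResolventAux

open List

abbrev EE (n : ℕ) := (Fin n → ℝ) × (Fin n → ℝ)

variable {n : ℕ}

noncomputable def Dd (w : EE n) (f : EE n → ℝ) : EE n → ℝ := fun z => fderiv ℝ f z w

noncomputable def DL : List (EE n) → (EE n → ℝ) → EE n → ℝ
  | [], f => f
  | w :: l, f => DL l (Dd w f)

lemma contDiff_Dd {f : EE n → ℝ} (hf : ContDiff ℝ (⊤ : ℕ∞) f) (w : EE n) :
    ContDiff ℝ (⊤ : ℕ∞) (Dd w f) :=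
  (hf.fderiv_right (by simp)).clm_apply contDiff_const

lemma contDiff_DL : ∀ (l : List (EE n)) {f : EE n → ℝ}, ContDiff ℝ (⊤ : ℕ∞) f → ContDiff ℝ (⊤ : ℕ∞) (DL l f)
  | [], _, hf => hf
  | w :: l, _, hf => contDiff_DL l (contDiff_Dd hf w)

lemma Dd_add {f g : EE n → ℝ} (hf : ContDiff ℝ (⊤ : ℕ∞) f) (hg : ContDiff ℝ (⊤ : ℕ∞) g) (w : EE n) :
    Dd w (fun z => f z + g z) = fun z => Dd w f z + Dd w g z := by
  funext z
  show fderiv ℝ (fun z => f z + g z) z w = _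
  rw [fderiv_fun_add ((hf.differentiable (by simp)) z) ((hg.differentiable (by simp)) z)]
  rfl

lemma Dd_neg {f : EE n → ℝ} (w : EE n) :
    Dd w (fun z => -(f z)) = fun z => -(Dd w f z) := by
  funext z
  show fderiv ℝ (fun z => -(f z)) z w = _
  rw [fderiv_fun_neg]
  rfl

lemma Dd_mul {f g : EE n → ℝ} (hf : ContDiff ℝ (⊤ : ℕ∞) f) (hg : ContDiff ℝ (⊤ : ℕ∞) g) (w : EE n) :
    Dd w (fun z => f z * g z) = fun z => Dd w f z * g z + f z * Dd w g z := by
  funext z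
  show fderiv ℝ (fun z => f z * g z) z w = _
  rw [fderiv_fun_mul ((hf.differentiable (by simp)) z) ((hg.differentiable (by simp)) z)]
  show (f z • fderiv ℝ g z + g z • fderiv ℝ f z) w = _
  simp [Dd]
  ring

lemma DL_add : ∀ (l : List (EE n)) {f g : EE n → ℝ}, ContDiff ℝ (⊤ : ℕ∞) f → ContDiff ℝ (⊤ : ℕ∞) g →
    DL l (fun z => f z + g z) = fun z => DL l f z + DL l g z
  | [], _, _, _, _ => rfl
  | w :: l, f, g, hf, hg => by
    show DL l (Dd w (fun z => f z + g z)) = _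
    rw [Dd_add hf hg w]
    exact DL_add l (contDiff_Dd hf w) (contDiff_Dd hg w)

lemma DL_neg : ∀ (l : List (EE n)) (f : EE n → ℝ),
    DL l (fun z => -(f z)) = fun z => -(DL l f z)
  | [], _ => rfl
  | w :: l, f => by
    show DL l (Dd w (fun z => -(f z))) = _
    rw [Dd_neg w]
    exact DL_neg l (Dd w f)

def splits : List (EE n) → List (List (EE n) × List (EE n))
  | [] => [([], [])]
  | w :: l => ((splits l).map fun ab => (w :: ab.1, ab.2)) ++
      ((splits l).map fun ab => (ab.1, w :: ab.2))

lemma splits_length : ∀ l : List (EE n), (splits l).length = 2 ^ l.length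
  | [] => rfl
  | w :: l => by
    simp only [splits, length_append, length_map, splits_length l, length_cons]
    ring

lemma splits_perm : ∀ (l : List (EE n)) {ab : List (EE n) × List (EE n)}, ab ∈ splits l →
    (ab.1 ++ ab.2).Perm l
  | [], ab, h => by
    simp only [splits, mem_singleton] at h
    simp [h]
  | w :: l, ab, h => by
    simp only [splits, mem_append, mem_map] at h
    rcases h with ⟨cd, hcd, rfl⟩ | ⟨cd, hcd, rfl⟩
    · exact (splits_perm l hcd).cons w
    · exact List.perm_middle.trans ((splits_perm l hcd).cons w)

lemma DL_mul : ∀ (l : List (EE n)) {f g : EE n → ℝ}, ContDiff ℝ (⊤ : ℕ∞) f → ContDiff ℝ (⊤ : ℕ∞) g →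
    ∀ z, DL l (fun y => f y * g y) z =
      ((splits l).map fun ab => DL ab.1 f z * DL ab.2 g z).sum
  | [], f, g, hf, hg, z => by simp [splits, DL]
  | w :: l, f, g, hf, hg, z => by
    show DL l (Dd w (fun y => f y * g y)) z = _
    rw [Dd_mul hf hg w,
      DL_add l (f := fun y => Dd w f y * g y) (g := fun y => f y * Dd w g y)
        ((contDiff_Dd hf w).mul hg) (hf.mul (contDiff_Dd hg w))]
    show DL l (fun y => Dd w f y * g y) z + DL l (fun y => f y * Dd w g y) z = _
    rw [DL_mul l (contDiff_Dd hf w) hg z, DL_mul l hf (contDiff_Dd hg w) z]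
    simp only [splits, map_append, map_map, sum_append]
    rfl

lemma abs_map_sum_le {β : Type*} : ∀ (L : List β) (f : β → ℝ) (B : ℝ), 0 ≤ B →
    (∀ b ∈ L, |f b| ≤ B) → |(L.map f).sum| ≤ L.length * B
  | [], f, B, hB, h => by simp [hB]
  | b :: L, f, B, hB, h => by
    simp only [map_cons, sum_cons, length_cons]
    calc |f b + (L.map f).sum| ≤ |f b| + |(L.map f).sum| := abs_add_le _ _
      _ ≤ B + L.length * B :=
        add_le_add (h b (by simp)) (abs_map_sum_le L f B hB fun x hx => h x (by simp [hx]))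
      _ = (L.length + 1 : ℕ) * B := by push_cast; ring

lemma iteratedFDeriv_eq_DL :
    ∀ (k : ℕ) {f : EE n → ℝ}, ContDiff ℝ (⊤ : ℕ∞) f → ∀ (v : Fin k → EE n) (x : EE n),
      iteratedFDeriv ℝ k f x v = DL (List.ofFn v).reverse f x
  | 0, f, hf, v, x => by simp [DL]
  | (m+1), f, hf, v, x => by
    rw [iteratedFDeriv_succ_apply_right]
    have h2 := (ContinuousLinearMap.apply ℝ ℝ (v (Fin.last m))).iteratedFDeriv_comp_left
      (f := fun y => fderiv ℝ f y) (i := m) (x := x) (hf.fderiv_right (m := (⊤ : ℕ∞)) (by simp)).contDiffAt (by exact_mod_cast le_top)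
    have h3 : (ContinuousLinearMap.apply ℝ ℝ (v (Fin.last m))) ∘ (fun y => fderiv ℝ f y)
        = Dd (v (Fin.last m)) f := rfl
    rw [h3] at h2
    have h1 : iteratedFDeriv ℝ m (fun y => fderiv ℝ f y) x (Fin.init v) (v (Fin.last m))
        = iteratedFDeriv ℝ m (Dd (v (Fin.last m)) f) x (Fin.init v) := by
      rw [h2]; rfl
    rw [h1, iteratedFDeriv_eq_DL m (contDiff_Dd hf _) (Fin.init v) x]
    have h4 : (List.ofFn v).reverse
        = v (Fin.last m) :: (List.ofFn (Fin.init v)).reverse := by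
      rw [List.ofFn_succ' v, List.concat_eq_append, List.reverse_append]
      rfl
    rw [h4]
    rfl

noncomputable def xcL (l : List (EE n)) : ℕ := l.countP fun w => decide (w.1 = 0)

lemma xcL_append (a b : List (EE n)) : xcL (a ++ b) = xcL a + xcL b := by
  simp [xcL, List.countP_append]

lemma xcL_perm {a b : List (EE n)} (h : a.Perm b) : xcL a = xcL b := h.countP_eq _

lemma xcL_cons (w : EE n) (m : List (EE n)) : xcL (w :: m) = xcL m + xcL [w] := by
  simp [xcL, List.countP_cons]

lemma xcL_reverse (l : List (EE n)) : xcL l.reverse = xcL l := (l.reverse_perm).countP_eq _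

lemma xiCount_eq : ∀ {k : ℕ} (v : Fin k → EE n), xiCount v = xcL (List.ofFn v) := by
  intro k
  induction k with
  | zero => intro v; simp [xiCount, xcL]
  | succ m ih =>
    intro v
    have h1 : xiCount v = (if (v 0).1 = 0 then 1 else 0) + xiCount (fun i => v i.succ) := by
      classical
      rw [xiCount, xiCount, Finset.card_filter, Finset.card_filter, Fin.sum_univ_succ]
    have h2 : xcL (List.ofFn v)
        = (if (v 0).1 = 0 then 1 else 0) + xcL (List.ofFn fun i => v i.succ) := by
      rw [List.ofFn_succ, xcL, List.countP_cons]
      by_cases h : (v 0).1 = 0 <;> simp [h, xcL, Nat.add_comm]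
    rw [h1, h2, ih (fun i => v i.succ)]

lemma rho_subadd (a b : ℕ) : min ((a + b : ℕ) : ℝ) 2 ≤ min (a : ℝ) 2 + min (b : ℝ) 2 := by
  push_cast
  have ha : (0:ℝ) ≤ a := Nat.cast_nonneg a
  have hb : (0:ℝ) ≤ b := Nat.cast_nonneg b
  rcases le_total ((a:ℝ)) 2 with h1 | h1 <;> rcases le_total ((b:ℝ)) 2 with h2 | h2 <;>
    simp [min_def] <;> split_ifs <;> linarith

def CoordL (l : List (EE n)) : Prop :=
  ∀ w ∈ l, ∃ j : Fin n, w = (Pi.single j 1, 0) ∨ w = (0, Pi.single j 1)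

end ResolventAux

open ResolventAux in
/-- Lemma 3.3: if `p ≥ δ(1+ψ)^μ` and the derivatives of `p` satisfy ratio-type bounds
`|∂^α∂^β p| ≤ c p (1+ψ)^{(-ρ(|α|)+ε)/2}`, then for every `λ ≥ 0` the resolvent symbol
`1/(p+λ)` belongs to `S^{-2μ+ε,ψ}_ρ`. -/
theorem resolvent_symbol_estimate {n : ℕ}
    (ψ : (Fin n → ℝ) → ℝ) (hψ : ∀ ξ, 0 ≤ ψ ξ)
    (p : ((Fin n → ℝ) × (Fin n → ℝ)) → ℝ) (hp : ContDiff ℝ (⊤ : ℕ∞) p)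
    (hpos : ∀ z, 0 < p z)
    (δ μ : ℝ) (hδ : 0 < δ) (hμ : 0 < μ)
    (hell : ∀ x ξ : Fin n → ℝ, δ * (1 + ψ ξ) ^ μ ≤ p (x, ξ))
    (hbound : ∀ ε : ℝ, 0 < ε → ∀ k : ℕ, ∃ c : ℝ, 0 ≤ c ∧
      ∀ v : Fin k → ((Fin n → ℝ) × (Fin n → ℝ)), IsCoordDirs v →
        ∀ x ξ : Fin n → ℝ, |iteratedFDeriv ℝ k p (x, ξ) v| ≤
          c * p (x, ξ) * (1 + ψ ξ) ^ ((-(min (xiCount v : ℝ) 2) + ε) / 2)) :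
    ∀ lam : ℝ, 0 ≤ lam → ∀ ε : ℝ, 0 < ε → ∀ k : ℕ, ∃ c : ℝ, 0 ≤ c ∧
      ∀ v : Fin k → ((Fin n → ℝ) × (Fin n → ℝ)), IsCoordDirs v →
        ∀ x ξ : Fin n → ℝ,
          |iteratedFDeriv ℝ k (fun z => 1 / (p z + lam)) (x, ξ) v| ≤
            c * (1 + ψ ξ) ^ ((-2 * μ + ε - min (xiCount v : ℝ) 2) / 2) := by
  intro lam hlam
  -- the resolvent symbol
  set q : EE n → ℝ := fun z => (p z + lam)⁻¹ with hqdef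
  have hpz : ∀ z : EE n, 0 < p z + lam := fun z => by have := hpos z; linarith
  have hqpos : ∀ z, 0 < q z := fun z => inv_pos.2 (hpz z)
  have hq_cd : ContDiff ℝ (⊤ : ℕ∞) q := (hp.add contDiff_const).inv fun z => (hpz z).ne'
  have hbase : ∀ ξ : Fin n → ℝ, (1:ℝ) ≤ 1 + ψ ξ := fun ξ => by have := hψ ξ; linarith
  have hbasepos : ∀ ξ : Fin n → ℝ, (0:ℝ) < 1 + ψ ξ := fun ξ => lt_of_lt_of_le one_pos (hbase ξ)
  have hAnn : ∀ (ξ : Fin n → ℝ) (e : ℝ), 0 ≤ (1 + ψ ξ) ^ e :=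
    fun ξ e => Real.rpow_nonneg (hbasepos ξ).le e
  have hqp1 : ∀ z, q z * (p z + lam) = 1 := fun z => inv_mul_cancel₀ (hpz z).ne'
  -- the derivative of q
  have hDq : ∀ w : EE n, Dd w q = fun y => -(q y) * (q y * Dd w p y) := by
    intro w; funext z
    have hpd : DifferentiableAt ℝ (fun y : EE n => p y + lam) z :=
      ((hp.differentiable (by simp)) z).add_const lam
    have hinv : DifferentiableAt ℝ (fun t : ℝ => t⁻¹) (p z + lam) :=
      differentiableAt_inv (hpz z).ne'
    have hcomp : Dd w q z
        = fderiv ℝ (fun t : ℝ => t⁻¹) (p z + lam) (fderiv ℝ (fun y : EE n => p y + lam) z w) := by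
      show fderiv ℝ q z w = _
      rw [show q = (fun t : ℝ => t⁻¹) ∘ (fun y : EE n => p y + lam) from rfl,
        fderiv_comp z hinv hpd]
      rfl
    rw [hcomp, fderiv_inv, fderiv_add_const]
    simp only [ContinuousLinearMap.toSpanSingleton_apply, ContinuousLinearMap.one_apply, smul_eq_mul]
    show fderiv ℝ p z w * -((p z + lam) ^ 2)⁻¹ = -(q z) * (q z * fderiv ℝ p z w)
    have hqz : q z = (p z + lam)⁻¹ := rfl
    rw [hqz, show -(((p z + lam)) ^ 2)⁻¹ = -((p z + lam)⁻¹ * (p z + lam)⁻¹) by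
      rw [sq, mul_inv]]
    ring
  -- uniform derivative bounds for p along coordinate lists, exact length
  have hpe : ∀ ε : ℝ, 0 < ε → ∀ K : ℕ, ∃ c : ℝ, 0 ≤ c ∧ ∀ l : List (EE n), CoordL l →
      l.length = K → ∀ z : EE n,
      |DL l p z| ≤ c * p z * (1 + ψ z.2) ^ ((-(min ((xcL l : ℕ) : ℝ) 2) + ε) / 2) := by
    intro ε hε K
    obtain ⟨c, hc0, hc⟩ := hbound ε hε K
    refine ⟨c, hc0, ?_⟩
    intro l hl hlen z
    have hrl : l.reverse.length = K := by simpa using hlen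
    subst hrl
    have hv := iteratedFDeriv_eq_DL l.reverse.length hp l.reverse.get z
    rw [List.ofFn_get, List.reverse_reverse] at hv
    have hcoord : IsCoordDirs l.reverse.get := by
      intro i
      exact hl _ (List.mem_reverse.1 (List.get_mem l.reverse i))
    have := hc l.reverse.get hcoord z.1 z.2
    simp only [Prod.mk.eta] at this
    rw [hv, xiCount_eq, List.ofFn_get, xcL_reverse] at this
    exact this
  -- uniform derivative bounds for p, length ≤ K
  have hpb : ∀ ε : ℝ, 0 < ε → ∀ K : ℕ, ∃ c : ℝ, 0 ≤ c ∧ ∀ l : List (EE n), CoordL l →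
      l.length ≤ K → ∀ z : EE n,
      |DL l p z| ≤ c * p z * (1 + ψ z.2) ^ ((-(min ((xcL l : ℕ) : ℝ) 2) + ε) / 2) := by
    intro ε hε K
    induction K with
    | zero =>
      obtain ⟨c, hc0, hc⟩ := hpe ε hε 0
      exact ⟨c, hc0, fun l hl hlen z => hc l hl (Nat.le_zero.1 hlen) z⟩
    | succ K ih =>
      obtain ⟨c₁, h10, h1⟩ := ih
      obtain ⟨c₂, h20, h2⟩ := hpe ε hε (K+1)
      refine ⟨max c₁ c₂, le_max_of_le_left h10, ?_⟩
      intro l hl hlen z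
      rcases le_or_gt l.length K with hK | hK
      · exact (h1 l hl hK z).trans (mul_le_mul_of_nonneg_right
          (mul_le_mul_of_nonneg_right (le_max_left _ _) (hpos z).le) (hAnn z.2 _))
      · exact (h2 l hl (le_antisymm hlen hK) z).trans (mul_le_mul_of_nonneg_right
          (mul_le_mul_of_nonneg_right (le_max_right _ _) (hpos z).le) (hAnn z.2 _))
  -- the key estimate for q
  have key : ∀ k : ℕ, ∀ ε : ℝ, 0 < ε → ∃ c : ℝ, 0 ≤ c ∧ ∀ l : List (EE n), CoordL l →
      l.length ≤ k → ∀ z : EE n,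
      |DL l q z| ≤ c * q z * (1 + ψ z.2) ^ ((-(min ((xcL l : ℕ) : ℝ) 2) + ε) / 2) := by
    intro k
    induction k with
    | zero =>
      intro ε hε
      refine ⟨1, zero_le_one, ?_⟩
      intro l hl hlen z
      have hnil : l = [] := List.eq_nil_of_length_eq_zero (Nat.le_zero.1 hlen)
      subst hnil
      have e0 : (-(min ((xcL ([] : List (EE n)) : ℕ) : ℝ) 2) + ε) / 2 = ε / 2 := by
        norm_num [xcL]
      rw [e0]
      show |q z| ≤ 1 * q z * (1 + ψ z.2) ^ (ε / 2)
      have h2 : (1:ℝ) ≤ (1 + ψ z.2) ^ (ε/2) := by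
        calc (1:ℝ) = (1 + ψ z.2) ^ (0:ℝ) := (Real.rpow_zero _).symm
          _ ≤ _ := Real.rpow_le_rpow_of_exponent_le (hbase z.2) (by linarith)
      rw [abs_of_pos (hqpos z), one_mul]
      nlinarith [hqpos z]
    | succ k ih =>
      intro ε hε
      obtain ⟨c₁, h10, h1⟩ := ih (ε/3) (by linarith)
      obtain ⟨cp, hcp0, hcp⟩ := hpb (ε/3) (by linarith) (k+1)
      refine ⟨max c₁ ((2:ℝ)^k * ((2:ℝ)^k * (c₁ * (c₁ * cp)))), le_max_of_le_left h10, ?_⟩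
      intro l hl hlen z
      rcases le_or_gt l.length k with hlk | hlk
      · -- just use the inductive bound
        refine (h1 l hl hlk z).trans ?_
        have hWW : (1 + ψ z.2) ^ ((-(min ((xcL l : ℕ) : ℝ) 2) + ε/3)/2)
            ≤ (1 + ψ z.2) ^ ((-(min ((xcL l : ℕ) : ℝ) 2) + ε)/2) :=
          Real.rpow_le_rpow_of_exponent_le (hbase z.2) (by linarith)
        calc c₁ * q z * (1 + ψ z.2) ^ ((-(min ((xcL l : ℕ) : ℝ) 2) + ε/3)/2)
            ≤ c₁ * q z * (1 + ψ z.2) ^ ((-(min ((xcL l : ℕ) : ℝ) 2) + ε)/2) :=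
              mul_le_mul_of_nonneg_left hWW (mul_nonneg h10 (hqpos z).le)
          _ ≤ max c₁ ((2:ℝ)^k * ((2:ℝ)^k * (c₁ * (c₁ * cp)))) * q z
              * (1 + ψ z.2) ^ ((-(min ((xcL l : ℕ) : ℝ) 2) + ε)/2) :=
              mul_le_mul_of_nonneg_right
                (mul_le_mul_of_nonneg_right (le_max_left _ _) (hqpos z).le) (hAnn z.2 _)
      · have hlen1 : l.length = k + 1 := le_antisymm hlen hlk
        obtain ⟨w, l', rfl⟩ : ∃ w l', l = w :: l' := by
          cases l with
          | nil => simp at hlen1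
          | cons a l' => exact ⟨a, l', rfl⟩
        have hl'len : l'.length = k := by simpa using hlen1
        have hl' : CoordL l' := fun u hu => hl u (List.mem_cons_of_mem _ hu)
        -- outer Leibniz expansion
        have e2 : DL (w :: l') q z
            = ((splits l').map fun ab =>
                DL ab.1 (fun y => -(q y)) z * DL ab.2 (fun y => q y * Dd w p y) z).sum := by
          show DL l' (Dd w q) z = _
          rw [hDq w]
          exact DL_mul l' hq_cd.neg (hq_cd.mul (contDiff_Dd hp w)) z
        rw [e2]
        -- bound for each outer term
        have houter : ∀ ab ∈ splits l',
            |DL ab.1 (fun y => -(q y)) z * DL ab.2 (fun y => q y * Dd w p y) z|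
            ≤ (2:ℝ)^k * (c₁ * (c₁ * cp))
                * (q z * (1 + ψ z.2) ^ ((-(min ((xcL (w :: l') : ℕ) : ℝ) 2) + ε) / 2)) := by
          rintro ⟨a, b⟩ hab
          have hperm := splits_perm l' hab
          have habxc : xcL a + xcL b = xcL l' := by
            rw [← xcL_append]; exact xcL_perm hperm
          have hablen : a.length + b.length = l'.length := by
            simpa using hperm.length_eq
          have hcoorda : CoordL a := fun u hu =>
            hl' u (hperm.subset (List.mem_append_left _ hu))
          have hcoordb : CoordL b := fun u hu =>
            hl' u (hperm.subset (List.mem_append_right _ hu))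
          -- first factor
          have hb1 : |DL a (fun y => -(q y)) z|
              ≤ c₁ * q z * (1 + ψ z.2) ^ ((-(min ((xcL a : ℕ) : ℝ) 2) + ε/3)/2) := by
            rw [DL_neg a q]
            rw [abs_neg]
            exact h1 a hcoorda (by omega) z
          -- inner Leibniz expansion
          have e3 : DL b (fun y => q y * Dd w p y) z
              = ((splits b).map fun cd => DL cd.1 q z * DL cd.2 (Dd w p) z).sum :=
            DL_mul b hq_cd (contDiff_Dd hp w) z
          -- bound for each inner term
          have hinner : ∀ cd ∈ splits b,
              |DL cd.1 q z * DL cd.2 (Dd w p) z|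
              ≤ c₁ * cp * (q z * (p z
                  * (1 + ψ z.2) ^ ((-(min ((xcL b + xcL [w] : ℕ) : ℝ) 2) + (ε/3 + ε/3))/2))) := by
            rintro ⟨b1, b2⟩ hcd
            have hpermb := splits_perm b hcd
            have hxcb : xcL b1 + xcL b2 = xcL b := by
              rw [← xcL_append]; exact xcL_perm hpermb
            have hlenb : b1.length + b2.length = b.length := by simpa using hpermb.length_eq
            have hcb1 : CoordL b1 := fun u hu =>
              hcoordb u (hpermb.subset (List.mem_append_left _ hu))
            have hcb2 : CoordL (w :: b2) := by
              intro u hu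
              rcases List.mem_cons.1 hu with rfl | hu
              · exact hl u List.mem_cons_self
              · exact hcoordb u (hpermb.subset (List.mem_append_right _ hu))
            have hq1 : |DL b1 q z|
                ≤ c₁ * q z * (1 + ψ z.2) ^ ((-(min ((xcL b1 : ℕ) : ℝ) 2) + ε/3)/2) :=
              h1 b1 hcb1 (by omega) z
            have hp3 : |DL b2 (Dd w p) z|
                ≤ cp * p z * (1 + ψ z.2) ^ ((-(min ((xcL (w :: b2) : ℕ) : ℝ) 2) + ε/3)/2) := by
              show |DL (w :: b2) p z| ≤ _
              exact hcp (w :: b2) hcb2 (by simp only [List.length_cons]; omega) z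
            have hAA : (1 + ψ z.2) ^ ((-(min ((xcL b1 : ℕ) : ℝ) 2) + ε/3)/2)
                * (1 + ψ z.2) ^ ((-(min ((xcL (w :: b2) : ℕ) : ℝ) 2) + ε/3)/2)
                ≤ (1 + ψ z.2) ^ ((-(min ((xcL b + xcL [w] : ℕ) : ℝ) 2) + (ε/3 + ε/3))/2) := by
              rw [← Real.rpow_add (hbasepos z.2)]
              apply Real.rpow_le_rpow_of_exponent_le (hbase z.2)
              have hsub := rho_subadd (xcL b1) (xcL b2 + xcL [w])
              rw [show xcL b1 + (xcL b2 + xcL [w]) = xcL b + xcL [w] by omega] at hsub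
              rw [xcL_cons w b2]
              linarith
            calc |DL b1 q z * DL b2 (Dd w p) z| = |DL b1 q z| * |DL b2 (Dd w p) z| :=
                abs_mul _ _
              _ ≤ (c₁ * q z * (1 + ψ z.2) ^ ((-(min ((xcL b1 : ℕ) : ℝ) 2) + ε/3)/2))
                  * (cp * p z * (1 + ψ z.2) ^ ((-(min ((xcL (w :: b2) : ℕ) : ℝ) 2) + ε/3)/2)) :=
                mul_le_mul hq1 hp3 (abs_nonneg _)
                  (mul_nonneg (mul_nonneg h10 (hqpos z).le) (hAnn z.2 _))
              _ = c₁ * cp * (q z * (p z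
                  * ((1 + ψ z.2) ^ ((-(min ((xcL b1 : ℕ) : ℝ) 2) + ε/3)/2)
                    * (1 + ψ z.2) ^ ((-(min ((xcL (w :: b2) : ℕ) : ℝ) 2) + ε/3)/2)))) := by
                ring
              _ ≤ c₁ * cp * (q z * (p z
                  * (1 + ψ z.2) ^ ((-(min ((xcL b + xcL [w] : ℕ) : ℝ) 2) + (ε/3 + ε/3))/2))) := by
                apply mul_le_mul_of_nonneg_left _ (mul_nonneg h10 hcp0)
                apply mul_le_mul_of_nonneg_left _ (hqpos z).le
                exact mul_le_mul_of_nonneg_left hAA (hpos z).le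
          -- sum up inner terms
          have hsum2 : |DL b (fun y => q y * Dd w p y) z|
              ≤ (2:ℝ)^k * (c₁ * cp * (q z * (p z
                  * (1 + ψ z.2) ^ ((-(min ((xcL b + xcL [w] : ℕ) : ℝ) 2) + (ε/3 + ε/3))/2)))) := by
            rw [e3]
            refine (abs_map_sum_le (splits b) _ _
              (mul_nonneg (mul_nonneg h10 hcp0) (mul_nonneg (hqpos z).le
                (mul_nonneg (hpos z).le (hAnn z.2 _)))) hinner).trans ?_
            have hcard : ((splits b).length : ℝ) = (2:ℝ) ^ b.length := by
              rw [splits_length]; push_cast; ring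
            rw [hcard]
            exact mul_le_mul_of_nonneg_right (pow_le_pow_right₀ (by norm_num) (by omega))
              (mul_nonneg (mul_nonneg h10 hcp0) (mul_nonneg (hqpos z).le
                (mul_nonneg (hpos z).le (hAnn z.2 _))))
          -- combine outer
          have hqqp : q z * q z * p z ≤ q z := by
            calc q z * q z * p z ≤ q z * q z * (p z + lam) :=
                mul_le_mul_of_nonneg_left (by linarith) (mul_nonneg (hqpos z).le (hqpos z).le)
              _ = q z * (q z * (p z + lam)) := by ring
              _ = q z := by rw [hqp1 z, mul_one]
          have hAA2 : (1 + ψ z.2) ^ ((-(min ((xcL a : ℕ) : ℝ) 2) + ε/3)/2)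
              * (1 + ψ z.2) ^ ((-(min ((xcL b + xcL [w] : ℕ) : ℝ) 2) + (ε/3 + ε/3))/2)
              ≤ (1 + ψ z.2) ^ ((-(min ((xcL (w :: l') : ℕ) : ℝ) 2) + ε) / 2) := by
            rw [← Real.rpow_add (hbasepos z.2)]
            apply Real.rpow_le_rpow_of_exponent_le (hbase z.2)
            have hsub := rho_subadd (xcL a) (xcL b + xcL [w])
            rw [show xcL a + (xcL b + xcL [w]) = xcL (w :: l') by rw [xcL_cons w l']; omega]
              at hsub
            linarith
          calc |DL a (fun y => -(q y)) z * DL b (fun y => q y * Dd w p y) z|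
              = |DL a (fun y => -(q y)) z| * |DL b (fun y => q y * Dd w p y) z| := abs_mul _ _
            _ ≤ (c₁ * q z * (1 + ψ z.2) ^ ((-(min ((xcL a : ℕ) : ℝ) 2) + ε/3)/2))
                * ((2:ℝ)^k * (c₁ * cp * (q z * (p z
                  * (1 + ψ z.2) ^ ((-(min ((xcL b + xcL [w] : ℕ) : ℝ) 2) + (ε/3 + ε/3))/2))))) :=
              mul_le_mul hb1 hsum2 (abs_nonneg _)
                (mul_nonneg (mul_nonneg h10 (hqpos z).le) (hAnn z.2 _))
            _ = (2:ℝ)^k * (c₁ * (c₁ * cp)) * ((q z * q z * p z)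
                * ((1 + ψ z.2) ^ ((-(min ((xcL a : ℕ) : ℝ) 2) + ε/3)/2)
                  * (1 + ψ z.2) ^ ((-(min ((xcL b + xcL [w] : ℕ) : ℝ) 2) + (ε/3 + ε/3))/2))) := by
              ring
            _ ≤ (2:ℝ)^k * (c₁ * (c₁ * cp))
                * (q z * (1 + ψ z.2) ^ ((-(min ((xcL (w :: l') : ℕ) : ℝ) 2) + ε) / 2)) := by
              apply mul_le_mul_of_nonneg_left _ (mul_nonneg (by positivity)
                (mul_nonneg h10 (mul_nonneg h10 hcp0)))
              exact mul_le_mul hqqp hAA2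
                (mul_nonneg (hAnn z.2 _) (hAnn z.2 _)) (hqpos z).le
        -- sum up outer terms
        refine (abs_map_sum_le (splits l') _ _
          (mul_nonneg (mul_nonneg (by positivity) (mul_nonneg h10 (mul_nonneg h10 hcp0)))
            (mul_nonneg (hqpos z).le (hAnn z.2 _))) houter).trans ?_
        have hcard : ((splits l').length : ℝ) = (2:ℝ) ^ k := by
          rw [splits_length, hl'len]; push_cast; ring
        rw [hcard]
        calc (2:ℝ)^k * ((2:ℝ)^k * (c₁ * (c₁ * cp))
              * (q z * (1 + ψ z.2) ^ ((-(min ((xcL (w :: l') : ℕ) : ℝ) 2) + ε) / 2)))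
            = ((2:ℝ)^k * ((2:ℝ)^k * (c₁ * (c₁ * cp)))) * q z
              * (1 + ψ z.2) ^ ((-(min ((xcL (w :: l') : ℕ) : ℝ) 2) + ε) / 2) := by ring
          _ ≤ max c₁ ((2:ℝ)^k * ((2:ℝ)^k * (c₁ * (c₁ * cp)))) * q z
              * (1 + ψ z.2) ^ ((-(min ((xcL (w :: l') : ℕ) : ℝ) 2) + ε) / 2) :=
            mul_le_mul_of_nonneg_right
              (mul_le_mul_of_nonneg_right (le_max_right _ _) (hqpos z).le) (hAnn z.2 _)
  -- conclude
  intro ε hε k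
  obtain ⟨c₁, h10, h1⟩ := key k ε hε
  refine ⟨c₁ * δ⁻¹, by positivity, ?_⟩
  intro v hv x ξ
  have hfun : (fun z : EE n => 1 / (p z + lam)) = q := by
    funext z; rw [hqdef]; simp [one_div]
  rw [hfun, iteratedFDeriv_eq_DL k hq_cd v (x, ξ)]
  have hcoord : CoordL (List.ofFn v).reverse := by
    intro u hu
    rw [List.mem_reverse, List.mem_ofFn] at hu
    obtain ⟨i, rfl⟩ := hu
    exact hv i
  have hlenL : (List.ofFn v).reverse.length ≤ k := by simp
  have hxc : (xcL (List.ofFn v).reverse : ℕ) = xiCount v := by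
    rw [xcL_reverse, xiCount_eq]
  have hqle : q (x, ξ) ≤ δ⁻¹ * (1 + ψ ξ) ^ (-μ) := by
    have h2 : δ * (1 + ψ ξ) ^ μ ≤ p (x, ξ) + lam := by
      have := hell x ξ; linarith
    have h3 : (0:ℝ) < δ * (1 + ψ ξ) ^ μ := by
      have := Real.rpow_pos_of_pos (hbasepos ξ) μ; positivity
    calc q (x, ξ) = (p (x, ξ) + lam)⁻¹ := by rw [hqdef]
      _ ≤ (δ * (1 + ψ ξ) ^ μ)⁻¹ := by
        apply inv_anti₀ h3 h2
      _ = δ⁻¹ * ((1 + ψ ξ) ^ μ)⁻¹ := by rw [mul_inv]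
      _ = δ⁻¹ * (1 + ψ ξ) ^ (-μ) := by rw [← Real.rpow_neg (hbasepos ξ).le]
  have hb := h1 (List.ofFn v).reverse hcoord hlenL (x, ξ)
  rw [hxc] at hb
  refine hb.trans ?_
  have hcomb : (1 + ψ ξ) ^ (-μ) * (1 + ψ ξ) ^ ((-(min ((xiCount v : ℕ) : ℝ) 2) + ε)/2)
      = (1 + ψ ξ) ^ ((-2 * μ + ε - min ((xiCount v : ℕ) : ℝ) 2) / 2) := by
    rw [← Real.rpow_add (hbasepos ξ)]
    congr 1
    ring
  calc c₁ * q (x, ξ) * (1 + ψ ξ) ^ ((-(min ((xiCount v : ℕ) : ℝ) 2) + ε)/2)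
      ≤ c₁ * (δ⁻¹ * (1 + ψ ξ) ^ (-μ)) * (1 + ψ ξ) ^ ((-(min ((xiCount v : ℕ) : ℝ) 2) + ε)/2) :=
        mul_le_mul_of_nonneg_right (mul_le_mul_of_nonneg_left hqle h10) (hAnn ξ _)
    _ = c₁ * δ⁻¹ * ((1 + ψ ξ) ^ (-μ) * (1 + ψ ξ) ^ ((-(min ((xiCount v : ℕ) : ℝ) 2) + ε)/2)) := by
        ring
    _ = c₁ * δ⁻¹ * (1 + ψ ξ) ^ ((-2 * μ + ε - min ((xiCount v : ℕ) : ℝ) 2) / 2) := by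
        rw [hcomb]
end
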